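/- With notation as in the definition of Ŝ, one has Ŝ_{r₁,s₁,r₂,s₂}(x₁,y₁,x₂,y₂; D₁,D₂) = 0 unless x₁y₁ ≡ r₁s₁D₂ (mod D₁) and x₂y₂ ≡ r₂s₂D₁ (mod D₂). -/

import Mathlib

open scoped BigOperators

/-- e(x) = exp(2πix). -/
noncomputable def e (x : ℝ) : ℂ := Complex.exp (2 * Real.pi * Complex.I * x)

/-- A choice of a pair `(Y, Z)` with `Y·b + Z·c ≡ 1 (mod D)`, when one exists. -/
noncomputable def YZ (D : ℕ) (b c : ℤ) : ℤ × ℤ :=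
  letI := Classical.propDecidable (∃ p : ℤ × ℤ, p.1 * b + p.2 * c ≡ 1 [ZMOD (D : ℤ)])
  if h : ∃ p : ℤ × ℤ, p.1 * b + p.2 * c ≡ 1 [ZMOD (D : ℤ)] then h.choose else (0, 0)

/-- The long Weyl element GL(3) Kloosterman sum
`S(n₁,m₂,m₁,n₂;D₁,D₂) = ∑ e((n₁B₁ + m₁(Y₁D₂ − Z₁B₂))/D₁ + (m₂B₂ + n₂(Y₂D₁ − Z₂B₁))/D₂)`,
where the sum runs over `B₁,C₁ mod D₁` and `B₂,C₂ mod D₂` with `gcd(B_j,C_j,D_j)=1` and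
`D₁C₂ + B₁B₂ + D₂C₁ ≡ 0 mod D₁D₂`, and `Y_jB_j + Z_jC_j ≡ 1 mod D_j`. -/
noncomputable def SKl (n₁ m₂ m₁ n₂ : ℤ) (D₁ D₂ : ℕ) : ℂ :=
  ∑ b₁ ∈ Finset.range D₁, ∑ c₁ ∈ Finset.range D₁,
    ∑ b₂ ∈ Finset.range D₂, ∑ c₂ ∈ Finset.range D₂,
      if Nat.gcd (Nat.gcd b₁ c₁) D₁ = 1 ∧ Nat.gcd (Nat.gcd b₂ c₂) D₂ = 1 ∧
          (D₁ : ℤ) * c₂ + (b₁ : ℤ) * b₂ + (D₂ : ℤ) * c₁ ≡ 0 [ZMOD ((D₁ : ℤ) * D₂)] then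
        e ((((n₁ * b₁ + m₁ * ((YZ D₁ (b₁ : ℤ) (c₁ : ℤ)).1 * D₂
                - (YZ D₁ (b₁ : ℤ) (c₁ : ℤ)).2 * b₂) : ℤ)) : ℝ) / (D₁ : ℝ)
          + (((m₂ * b₂ + n₂ * ((YZ D₂ (b₂ : ℤ) (c₂ : ℤ)).1 * D₁
                - (YZ D₂ (b₂ : ℤ) (c₂ : ℤ)).2 * b₁) : ℤ)) : ℝ) / (D₂ : ℝ))
      else 0

/-- The normalized Fourier transform of the long Weyl element Kloosterman sum:
`Ŝ_{r₁,s₁,r₂,s₂}(x₁,y₁,x₂,y₂;D₁,D₂) = (1/(D₁²D₂²)) ∑_{n₁,m₁ mod D₁} ∑_{n₂,m₂ mod D₂}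
  S(n₁r₁, m₂r₂, m₁s₁, n₂s₂; D₁,D₂) e(−(x₁m₁+y₁n₁)/D₁ − (x₂m₂+y₂n₂)/D₂)`. -/
noncomputable def Shat (r₁ s₁ r₂ s₂ x₁ y₁ x₂ y₂ : ℤ) (D₁ D₂ : ℕ) : ℂ :=
  (1 / ((D₁ : ℂ) ^ 2 * (D₂ : ℂ) ^ 2)) *
    ∑ n₁ ∈ Finset.range D₁, ∑ m₁ ∈ Finset.range D₁,
      ∑ n₂ ∈ Finset.range D₂, ∑ m₂ ∈ Finset.range D₂,
        SKl ((n₁ : ℤ) * r₁) ((m₂ : ℤ) * r₂) ((m₁ : ℤ) * s₁) ((n₂ : ℤ) * s₂) D₁ D₂ *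
          e (-(((x₁ * (m₁ : ℤ) + y₁ * (n₁ : ℤ) : ℤ) : ℝ) / (D₁ : ℝ))
            - ((x₂ * (m₂ : ℤ) + y₂ * (n₂ : ℤ) : ℤ) : ℝ) / (D₂ : ℝ))

/-!
Expanding `Shat` and exchanging the sums turns it into a sum over the admissible
`(B₁, C₁, B₂, C₂)` of products of four complete exponential sums `∑_{n mod D} e(n a / D)`,
which vanish unless `D ∣ a`. A surviving term forces `y₁ ≡ r₁B₁`, `x₁ ≡ s₁(Y₁D₂ − Z₁B₂)`
(mod `D₁`); since `B₁B₂ ≡ −D₂C₁` (mod `D₁`), this gives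
`x₁y₁ ≡ r₁s₁D₂(Y₁B₁ + Z₁C₁) ≡ r₁s₁D₂`, and symmetrically modulo `D₂`.
-/

lemma e_add (x y : ℝ) : e (x + y) = e x * e y := by
  simp [e, mul_add, Complex.exp_add]

lemma e_intCast (n : ℤ) : e n = 1 := by
  rw [e, mul_comm]
  exact_mod_cast Complex.exp_int_mul_two_pi_mul_I n

lemma e_natCast_mul (n : ℕ) (x : ℝ) : e (n * x) = e x ^ n := by
  rw [e, e, ← Complex.exp_nat_mul]
  push_cast
  ring_nf

lemma e_eq_one_iff {x : ℝ} : e x = 1 ↔ ∃ n : ℤ, x = n := by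
  have h2πi : 2 * Real.pi * Complex.I ≠ 0 := by simp [Real.pi_ne_zero]
  simp only [e, Complex.exp_eq_one_iff, mul_comm _ (2 * Real.pi * Complex.I : ℂ),
    mul_right_inj' h2πi]
  exact exists_congr fun n => by norm_cast

noncomputable def expSum (D : ℕ) (a : ℤ) : ℂ :=
  ∑ n ∈ Finset.range D, e (n * a / D)

lemma expSum_eq (D : ℕ) (a : ℤ) : expSum D a = if (D : ℤ) ∣ a then (D : ℂ) else 0 := by
  rcases D.eq_zero_or_pos with rfl | hD
  · simp [expSum]
  have hDR : (D : ℝ) ≠ 0 := by positivity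
  split_ifs with hdvd
  · obtain ⟨k, rfl⟩ := hdvd
    have hterm (n : ℕ) : e (n * ((D * k : ℤ) : ℝ) / D) = 1 := by
      rw [← e_intCast (n * k)]
      congr 1
      push_cast
      field_simp
    rw [expSum, Finset.sum_congr rfl fun n _ => hterm n]
    simp
  · set ζ := e (a / D)
    have hpow (n : ℕ) : e (n * a / D) = ζ ^ n := by rw [mul_div_assoc, e_natCast_mul]
    have hζD : ζ ^ D = 1 := by rw [← hpow, mul_div_cancel_left₀ _ hDR, e_intCast]
    have hζ : ζ ≠ 1 := by
      rw [Ne, e_eq_one_iff]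
      rintro ⟨n, hn⟩
      exact hdvd ⟨n, by rw [div_eq_iff hDR] at hn; exact_mod_cast hn.trans (mul_comm _ _)⟩
    have := geom_sum_mul ζ D
    rw [hζD, sub_self, mul_eq_zero, sub_eq_zero] at this
    simpa [expSum, hpow, hζ] using this

lemma modEq_of_expSum_sub_ne_zero {D : ℕ} {a b : ℤ} (h : expSum D (a - b) ≠ 0) :
    b ≡ a [ZMOD D] := by
  by_contra hab
  exact h (by rw [expSum_eq, if_neg (mt Int.modEq_iff_dvd.mpr hab)])

lemma exists_bezout_of_gcd_gcd_eq_one {b c D : ℕ} (h : (b.gcd c).gcd D = 1) :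
    ∃ p : ℤ × ℤ, p.1 * b + p.2 * c ≡ 1 [ZMOD D] := by
  obtain ⟨u, v, huv⟩ := Nat.isCoprime_iff_coprime.mpr h
  refine ⟨(u * b.gcdA c, u * b.gcdB c), Int.modEq_iff_dvd.mpr ⟨v, ?_⟩⟩
  linear_combination u * Nat.gcd_eq_gcd_ab b c - huv

lemma YZ_spec {D b c : ℕ} (h : (b.gcd c).gcd D = 1) :
    (YZ D b c).1 * b + (YZ D b c).2 * c ≡ 1 [ZMOD D] := by
  rw [YZ, dif_pos (exists_bezout_of_gcd_gcd_eq_one h)]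
  exact (exists_bezout_of_gcd_gcd_eq_one h).choose_spec

lemma Finset.sum_sum_sum_sum_eq_sum_product {M α₁ α₂ α₃ α₄ : Type*} [AddCommMonoid M]
    (s₁ : Finset α₁) (s₂ : Finset α₂) (s₃ : Finset α₃) (s₄ : Finset α₄)
    (f : α₁ → α₂ → α₃ → α₄ → M) :
    ∑ a₁ ∈ s₁, ∑ a₂ ∈ s₂, ∑ a₃ ∈ s₃, ∑ a₄ ∈ s₄, f a₁ a₂ a₃ a₄
      = ∑ a ∈ s₁ ×ˢ s₂ ×ˢ s₃ ×ˢ s₄, f a.1 a.2.1 a.2.2.1 a.2.2.2 := by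
  simp only [Finset.sum_product]

lemma Finset.sum_comm_four {M α₁ α₂ α₃ α₄ β₁ β₂ β₃ β₄ : Type*} [AddCommMonoid M]
    (s₁ : Finset α₁) (s₂ : Finset α₂) (s₃ : Finset α₃) (s₄ : Finset α₄)
    (t₁ : Finset β₁) (t₂ : Finset β₂) (t₃ : Finset β₃) (t₄ : Finset β₄)
    (f : α₁ → α₂ → α₃ → α₄ → β₁ → β₂ → β₃ → β₄ → M) :
    ∑ a₁ ∈ s₁, ∑ a₂ ∈ s₂, ∑ a₃ ∈ s₃, ∑ a₄ ∈ s₄,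
      ∑ b₁ ∈ t₁, ∑ b₂ ∈ t₂, ∑ b₃ ∈ t₃, ∑ b₄ ∈ t₄, f a₁ a₂ a₃ a₄ b₁ b₂ b₃ b₄
    = ∑ b₁ ∈ t₁, ∑ b₂ ∈ t₂, ∑ b₃ ∈ t₃, ∑ b₄ ∈ t₄,
        ∑ a₁ ∈ s₁, ∑ a₂ ∈ s₂, ∑ a₃ ∈ s₃, ∑ a₄ ∈ s₄, f a₁ a₂ a₃ a₄ b₁ b₂ b₃ b₄ := by
  simp only [Finset.sum_sum_sum_sum_eq_sum_product s₁ s₂ s₃ s₄,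
    Finset.sum_sum_sum_sum_eq_sum_product t₁ t₂ t₃ t₄]
  exact Finset.sum_comm

lemma Shat_eq_sum_expSum (r₁ s₁ r₂ s₂ x₁ y₁ x₂ y₂ : ℤ) (D₁ D₂ : ℕ) :
    Shat r₁ s₁ r₂ s₂ x₁ y₁ x₂ y₂ D₁ D₂ =
      (1 / ((D₁ : ℂ) ^ 2 * (D₂ : ℂ) ^ 2)) *
      ∑ b₁ ∈ Finset.range D₁, ∑ c₁ ∈ Finset.range D₁,
        ∑ b₂ ∈ Finset.range D₂, ∑ c₂ ∈ Finset.range D₂,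
          if Nat.gcd (Nat.gcd b₁ c₁) D₁ = 1 ∧ Nat.gcd (Nat.gcd b₂ c₂) D₂ = 1 ∧
              (D₁ : ℤ) * c₂ + (b₁ : ℤ) * b₂ + (D₂ : ℤ) * c₁ ≡ 0 [ZMOD ((D₁ : ℤ) * D₂)] then
            expSum D₂ (r₂ * b₂ - x₂) *
              expSum D₂ (s₂ * ((YZ D₂ b₂ c₂).1 * D₁ - (YZ D₂ b₂ c₂).2 * b₁) - y₂) *
              expSum D₁ (s₁ * ((YZ D₁ b₁ c₁).1 * D₂ - (YZ D₁ b₁ c₁).2 * b₂) - x₁) *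
              expSum D₁ (r₁ * b₁ - y₁)
          else 0 := by
  rw [Shat]
  congr 1
  simp only [SKl, Finset.sum_mul, ite_mul, zero_mul]
  rw [Finset.sum_comm_four]
  refine Finset.sum_congr rfl fun b₁ _ => Finset.sum_congr rfl fun c₁ _ =>
    Finset.sum_congr rfl fun b₂ _ => Finset.sum_congr rfl fun c₂ _ => ?_
  split_ifs
  · simp only [expSum, Finset.sum_mul, Finset.mul_sum]
    refine Finset.sum_congr rfl fun n₁ _ => Finset.sum_congr rfl fun m₁ _ =>
      Finset.sum_congr rfl fun n₂ _ => Finset.sum_congr rfl fun m₂ _ => ?_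
    rw [← e_add, ← e_add, ← e_add, ← e_add]
    congr 1
    push_cast
    ring
  · simp

lemma exists_modEq_of_Shat_ne_zero {r₁ s₁ r₂ s₂ x₁ y₁ x₂ y₂ : ℤ} {D₁ D₂ : ℕ}
    (h : Shat r₁ s₁ r₂ s₂ x₁ y₁ x₂ y₂ D₁ D₂ ≠ 0) :
    ∃ b₁ c₁ b₂ c₂ : ℕ, Nat.gcd (Nat.gcd b₁ c₁) D₁ = 1 ∧ Nat.gcd (Nat.gcd b₂ c₂) D₂ = 1 ∧
      (D₁ : ℤ) * c₂ + (b₁ : ℤ) * b₂ + (D₂ : ℤ) * c₁ ≡ 0 [ZMOD ((D₁ : ℤ) * D₂)] ∧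
      y₁ ≡ r₁ * b₁ [ZMOD D₁] ∧
      x₁ ≡ s₁ * ((YZ D₁ b₁ c₁).1 * D₂ - (YZ D₁ b₁ c₁).2 * b₂) [ZMOD D₁] ∧
      y₂ ≡ s₂ * ((YZ D₂ b₂ c₂).1 * D₁ - (YZ D₂ b₂ c₂).2 * b₁) [ZMOD D₂] ∧
      x₂ ≡ r₂ * b₂ [ZMOD D₂] := by
  rw [Shat_eq_sum_expSum] at h
  obtain ⟨b₁, -, h⟩ := Finset.exists_ne_zero_of_sum_ne_zero (right_ne_zero_of_mul h)
  obtain ⟨c₁, -, h⟩ := Finset.exists_ne_zero_of_sum_ne_zero h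
  obtain ⟨b₂, -, h⟩ := Finset.exists_ne_zero_of_sum_ne_zero h
  obtain ⟨c₂, -, h⟩ := Finset.exists_ne_zero_of_sum_ne_zero h
  obtain ⟨⟨hg₁, hg₂, hrel⟩, h⟩ := ite_ne_right_iff.mp h
  simp only [ne_eq, mul_eq_zero, not_or] at h
  obtain ⟨⟨⟨hx₂, hy₂⟩, hx₁⟩, hy₁⟩ := h
  exact ⟨b₁, c₁, b₂, c₂, hg₁, hg₂, hrel, modEq_of_expSum_sub_ne_zero hy₁,
    modEq_of_expSum_sub_ne_zero hx₁, modEq_of_expSum_sub_ne_zero hy₂,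
    modEq_of_expSum_sub_ne_zero hx₂⟩

lemma mul_modEq_of_bezout {D₁ D₂ : ℕ} {b₁ c₁ b₂ c₂ Y Z r s x y : ℤ}
    (hrel : D₁ * c₂ + b₁ * b₂ + D₂ * c₁ ≡ 0 [ZMOD D₁ * D₂])
    (hYZ : Y * b₁ + Z * c₁ ≡ 1 [ZMOD D₁])
    (hx : x ≡ s * (Y * D₂ - Z * b₂) [ZMOD D₁]) (hy : y ≡ r * b₁ [ZMOD D₁]) :
    x * y ≡ r * s * D₂ [ZMOD D₁] := by
  have hrel₁ := hrel.of_mul_right D₂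
  rw [← ZMod.intCast_eq_intCast_iff] at hrel₁ hYZ hx hy ⊢
  push_cast [ZMod.natCast_self] at hrel₁ hYZ hx hy ⊢
  rw [hx, hy]
  linear_combination (r * s * D₂ : ZMod D₁) * hYZ - (r * s * Z : ZMod D₁) * hrel₁

theorem shat_vanishing_congruence_general (r₁ s₁ r₂ s₂ : ℤ)
    (x₁ y₁ x₂ y₂ : ℤ) (D₁ D₂ : ℕ)
    (hne : Shat r₁ s₁ r₂ s₂ x₁ y₁ x₂ y₂ D₁ D₂ ≠ 0) :
    x₁ * y₁ ≡ r₁ * s₁ * (D₂ : ℤ) [ZMOD (D₁ : ℤ)] ∧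
      x₂ * y₂ ≡ r₂ * s₂ * (D₁ : ℤ) [ZMOD (D₂ : ℤ)] := by
  obtain ⟨b₁, c₁, b₂, c₂, hg₁, hg₂, hrel, hy₁, hx₁, hy₂, hx₂⟩ :=
    exists_modEq_of_Shat_ne_zero hne
  have hrel' : (D₂ : ℤ) * c₁ + b₂ * b₁ + D₁ * c₂ ≡ 0 [ZMOD D₂ * D₁] := by
    convert hrel using 1 <;> ring
  refine ⟨mul_modEq_of_bezout hrel (YZ_spec hg₁) hx₁ hy₁, ?_⟩
  rw [mul_comm x₂]
  exact mul_modEq_of_bezout hrel' (YZ_spec hg₂) hy₂ hx₂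

theorem shat_vanishing_congruence (r₁ s₁ r₂ s₂ : ℤ)
    (hr₁ : r₁ ≠ 0) (hs₁ : s₁ ≠ 0) (hr₂ : r₂ ≠ 0) (hs₂ : s₂ ≠ 0)
    (x₁ y₁ x₂ y₂ : ℤ) (D₁ D₂ : ℕ) (hD₁ : 0 < D₁) (hD₂ : 0 < D₂)
    (hne : Shat r₁ s₁ r₂ s₂ x₁ y₁ x₂ y₂ D₁ D₂ ≠ 0) :
    x₁ * y₁ ≡ r₁ * s₁ * (D₂ : ℤ) [ZMOD (D₁ : ℤ)] ∧
      x₂ * y₂ ≡ r₂ * s₂ * (D₁ : ℤ) [ZMOD (D₂ : ℤ)] :=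
  shat_vanishing_congruence_general r₁ s₁ r₂ s₂ x₁ y₁ x₂ y₂ D₁ D₂ hne
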